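/- Let b > 0 and α > 0 be real numbers, let ℓ ≥ 0 be a fixed integer, and set r = r(n) = b·n^α. Define G_ℓ(n) = (Γ((n-ℓ)/r + 1)/Γ((n-ℓ)/2 + 1)) · (Γ(n/2 + 1)/Γ(n/r + 1))^{(n-ℓ)/n}. Then lim_{n→∞} G_ℓ(n) = e^{ℓ/2}. -/

import Mathlib

/-!
Write `F x = log Γ(x + 1)` and `t = (n - ℓ) / n`. Then `log G_ℓ(n)` is the sum of
`F (t n / r) - t F (n / r)` and `t F (n / 2) - F (t n / 2)`.

Log-convexity of `Γ` together with `F x = F (x - 1) + log x` squeezes the slope of `log Γ` on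
`[x, y]` between `log (x - 1)` (or `-log π`) and `log y`. Hence the first term is
`O ((ℓ / r) log n)`, which vanishes as soon as `log n = o(r)`. For the second term the slope bounds
give `F x - F (x - c) = c log x + o(1)`, and the crude Stirling estimate
`F x = x log x - x + o(x)` (from the factorial at `⌊x⌋`) turns `t F (n / 2) - F (t n / 2)` into
`ℓ / 2 + o(1)`.
-/

open Real Filter Topology

theorem ConvexOn.slope_le_slope {𝕜 : Type*} [Field 𝕜] [LinearOrder 𝕜] [IsStrictOrderedRing 𝕜]
    {s : Set 𝕜} {f : 𝕜 → 𝕜} (hf : ConvexOn 𝕜 s f) {a b c d : 𝕜}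
    (ha : a ∈ s) (hb : b ∈ s) (hc : c ∈ s) (hd : d ∈ s)
    (hab : a < b) (hcd : c < d) (hac : a ≤ c) (hbd : b ≤ d) :
    (f b - f a) / (b - a) ≤ (f d - f c) / (d - c) :=
  calc (f b - f a) / (b - a) ≤ (f d - f a) / (d - a) :=
        hf.secant_mono ha hb hd hab.ne' (hab.trans_le hbd).ne' hbd
    _ = (f a - f d) / (a - d) := by rw [← neg_div_neg_eq, neg_sub, neg_sub]
    _ ≤ (f c - f d) / (c - d) := hf.secant_mono hd ha hc (hab.trans_le hbd).ne hcd.ne hac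
    _ = (f d - f c) / (d - c) := by rw [← neg_div_neg_eq, neg_sub, neg_sub]

namespace Real

lemma log_Gamma_add_one {x : ℝ} (hx : 0 < x) :
    log (Gamma (x + 1)) = log (Gamma x) + log x := by
  rw [Gamma_add_one hx.ne', log_mul hx.ne' (Gamma_pos_of_pos hx).ne', add_comm]

lemma log_Gamma_slope_le {a b c d : ℝ} (ha : 0 < a) (hab : a < b) (hcd : c < d)
    (hac : a ≤ c) (hbd : b ≤ d) :
    (log (Gamma b) - log (Gamma a)) / (b - a) ≤ (log (Gamma d) - log (Gamma c)) / (d - c) :=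
  convexOn_log_Gamma.slope_le_slope (f := log ∘ Gamma) ha (ha.trans hab) (ha.trans_le hac)
    (by linarith : 0 < d) hab hcd hac hbd

lemma log_Gamma_sub_le_mul_log {x y : ℝ} (hx : 0 < x) (hxy : x ≤ y) :
    log (Gamma y) - log (Gamma x) ≤ (y - x) * log y := by
  rcases hxy.eq_or_lt with rfl | hxy
  · simp
  have h := log_Gamma_slope_le hx hxy (lt_add_one y) hxy.le (lt_add_one y).le
  rwa [log_Gamma_add_one (hx.trans hxy), add_sub_cancel_left, add_sub_cancel_left, div_one,
    div_le_iff₀ (sub_pos.2 hxy), mul_comm] at h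

lemma mul_log_sub_one_le_log_Gamma_sub {x y : ℝ} (hx : 1 < x) (hxy : x ≤ y) :
    (y - x) * log (x - 1) ≤ log (Gamma y) - log (Gamma x) := by
  rcases hxy.eq_or_lt with rfl | hxy
  · simp
  have h := log_Gamma_slope_le (sub_pos.2 hx) (sub_one_lt x) hxy (sub_one_lt x).le hxy.le
  have hx' := log_Gamma_add_one (sub_pos.2 hx)
  rw [sub_add_cancel] at hx'
  rw [hx', sub_sub_cancel, add_sub_cancel_left, div_one, le_div_iff₀ (sub_pos.2 hxy)] at h
  linarith

lemma neg_mul_log_pi_le_log_Gamma_sub {x y : ℝ} (hx : 1 ≤ x) (hxy : x ≤ y) :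
    -((y - x) * log π) ≤ log (Gamma y) - log (Gamma x) := by
  rcases hxy.eq_or_lt with rfl | hxy
  · simp
  have h := log_Gamma_slope_le one_half_pos one_half_lt_one hxy (by linarith) (by linarith)
  have h_half : (log (Gamma 1) - log (Gamma (1 / 2))) / (1 - 1 / 2) = -log π := by
    rw [Gamma_one, Gamma_one_half_eq, log_one, log_sqrt pi_pos.le]
    ring
  rwa [h_half, le_div_iff₀ (sub_pos.2 hxy), neg_mul, mul_comm] at h

lemma abs_log_Gamma_sub_le {x y : ℝ} (hx : 1 ≤ x) (hxy : x ≤ y) :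
    |log (Gamma y) - log (Gamma x)| ≤ (y - x) * log (π * y) := by
  have hlog_pi : 0 ≤ (y - x) * log π :=
    mul_nonneg (sub_nonneg.2 hxy) (log_nonneg (by linarith [pi_gt_three]))
  have hlog_y : 0 ≤ (y - x) * log y := mul_nonneg (sub_nonneg.2 hxy) (log_nonneg (by linarith))
  have hup := log_Gamma_sub_le_mul_log (by linarith) hxy
  have hlo := neg_mul_log_pi_le_log_Gamma_sub hx hxy
  rw [log_mul pi_pos.ne' (by linarith), mul_add, abs_le]
  constructor <;> linarith

lemma abs_log_Gamma_mul_add_one_sub_le {t z : ℝ} (ht₀ : 0 ≤ t) (ht₁ : t ≤ 1) (hz : 0 ≤ z) :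
    |log (Gamma (t * z + 1)) - t * log (Gamma (z + 1))| ≤
      2 * ((1 - t) * z) * log (π * (z + 1)) := by
  have hshort := abs_log_Gamma_sub_le (x := t * z + 1) (y := z + 1) (by nlinarith) (by nlinarith)
  have hlong := abs_log_Gamma_sub_le (x := 1) (y := z + 1) le_rfl (by linarith)
  rw [Gamma_one, log_one, sub_zero, add_sub_cancel_right] at hlong
  calc |log (Gamma (t * z + 1)) - t * log (Gamma (z + 1))|
      = |(1 - t) * log (Gamma (z + 1)) - (log (Gamma (z + 1)) - log (Gamma (t * z + 1)))| := by
        ring_nf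
    _ ≤ (1 - t) * |log (Gamma (z + 1))| + |log (Gamma (z + 1)) - log (Gamma (t * z + 1))| := by
        grw [abs_sub, abs_mul, abs_of_nonneg (sub_nonneg.2 ht₁)]
    _ ≤ (1 - t) * (z * log (π * (z + 1))) + (z + 1 - (t * z + 1)) * log (π * (z + 1)) := by
        gcongr
    _ = 2 * ((1 - t) * z) * log (π * (z + 1)) := by ring

lemma sub_mul_log_le_mul_log_sub_sub {m x : ℝ} (hm : 0 < m) (hmx : m ≤ x) :
    (x - m) * log m ≤ (x * log x - x) - (m * log m - m) := by
  have hx : 0 < x := hm.trans_le hmx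
  have h := one_sub_inv_le_log_of_pos (div_pos hx hm)
  rw [log_div hx.ne' hm.ne', inv_div] at h
  have h' := mul_le_mul_of_nonneg_left h hx.le
  have e : x * (1 - m / x) = x - m := by field_simp
  linarith

lemma mul_log_sub_sub_le_sub_mul_log {m x : ℝ} (hm : 0 < m) (hmx : m ≤ x) :
    (x * log x - x) - (m * log m - m) ≤ (x - m) * log x := by
  have hx : 0 < x := hm.trans_le hmx
  have h := log_le_sub_one_of_pos (div_pos hx hm)
  rw [log_div hx.ne' hm.ne'] at h
  have h' := mul_le_mul_of_nonneg_left h hm.le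
  have e : m * (x / m - 1) = x - m := by field_simp
  linarith

noncomputable def stirlingRemainder (x : ℝ) : ℝ := log (Gamma (x + 1)) - (x * log x - x)

lemma tendsto_stirlingRemainder_natCast_div :
    Tendsto (fun m : ℕ => stirlingRemainder m / m) atTop (𝓝 0) := by
  have hseq : Tendsto (fun m : ℕ => log (Stirling.stirlingSeq m) / m) atTop (𝓝 0) :=
    ((continuousAt_log (sqrt_pos.2 pi_pos).ne').tendsto.comp
      Stirling.tendsto_stirlingSeq_sqrt_pi).div_atTop tendsto_natCast_atTop_atTop
  have hlog : Tendsto (fun m : ℕ => log (2 * m) / m) atTop (𝓝 0) := by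
    have h := ((isLittleO_log_id_atTop.tendsto_div_nhds_zero).comp
      (tendsto_natCast_atTop_atTop.const_mul_atTop two_pos)).const_mul 2
    rw [mul_zero] at h
    refine h.congr' ?_
    filter_upwards [eventually_ne_atTop 0] with m hm
    simp only [Function.comp_apply, id]
    field_simp
  have h := hseq.add (hlog.const_mul (1 / 2))
  rw [mul_zero, add_zero] at h
  refine h.congr' ?_
  filter_upwards [eventually_ne_atTop 0] with m hm
  have hm' : (m : ℝ) ≠ 0 := Nat.cast_ne_zero.2 hm
  rw [stirlingRemainder, Gamma_nat_eq_factorial, Stirling.log_stirlingSeq_formula,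
    log_div hm' (exp_ne_zero 1), log_exp]
  field_simp
  ring

lemma abs_stirlingRemainder_sub_floor_le {x : ℝ} (hx : 1 ≤ x) :
    |stirlingRemainder x - stirlingRemainder ⌊x⌋₊| ≤ log (x + 1) := by
  set m : ℕ := ⌊x⌋₊
  have hm : (1 : ℝ) ≤ m := by exact_mod_cast Nat.one_le_floor_iff x |>.2 hx
  have hmx : (m : ℝ) ≤ x := Nat.floor_le (by linarith)
  have hxm : x - m ≤ 1 := by linarith [Nat.lt_floor_add_one x]
  have hGamma_up := log_Gamma_sub_le_mul_log (by linarith : (0 : ℝ) < m + 1)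
    (by linarith : (m : ℝ) + 1 ≤ x + 1)
  have hGamma_lo := mul_log_sub_one_le_log_Gamma_sub (by linarith : (1 : ℝ) < m + 1)
    (by linarith : (m : ℝ) + 1 ≤ x + 1)
  rw [add_sub_cancel_right, add_sub_add_right_eq_sub] at hGamma_lo
  rw [add_sub_add_right_eq_sub] at hGamma_up
  have hxlogx_lo := sub_mul_log_le_mul_log_sub_sub (by linarith) hmx
  have hxlogx_up := mul_log_sub_sub_le_sub_mul_log (by linarith) hmx
  have hlogm : 0 ≤ log m := log_nonneg hm
  have hlogmx : log m ≤ log x := log_le_log (by linarith) hmx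
  have hlogx1 : log x ≤ log (x + 1) := log_le_log (by linarith) (by linarith)
  have h₁ : 0 ≤ (x - m) * log m := mul_nonneg (by linarith) hlogm
  have h₂ : (x - m) * log x ≤ log x := by nlinarith
  have h₃ : (x - m) * log (x + 1) ≤ log (x + 1) := by nlinarith
  unfold stirlingRemainder
  rw [abs_le]
  constructor <;> nlinarith

lemma tendsto_stirlingRemainder_div :
    Tendsto (fun x => stirlingRemainder x / x) atTop (𝓝 0) := by
  have hfloor : Tendsto (fun x : ℝ => |stirlingRemainder ⌊x⌋₊ / ⌊x⌋₊|) atTop (𝓝 0) := by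
    simpa using (tendsto_stirlingRemainder_natCast_div.comp tendsto_nat_floor_atTop).abs
  have hlog : Tendsto (fun x => log (x + 1) / x) atTop (𝓝 0) := by
    have h := ((tendsto_log_comp_add_sub_log 1).div_atTop tendsto_id).add
      isLittleO_log_id_atTop.tendsto_div_nhds_zero
    rw [add_zero] at h
    exact h.congr fun x => by simp only [id]; ring
  have h := hfloor.add hlog
  rw [add_zero] at h
  refine squeeze_zero_norm' ?_ h
  filter_upwards [eventually_ge_atTop 1] with x hx
  set m : ℕ := ⌊x⌋₊
  have hm : (0 : ℝ) < m := by exact_mod_cast Nat.one_le_floor_iff x |>.2 hx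
  have hmx : (m : ℝ) / x ≤ 1 := (div_le_one (by linarith)).2 (Nat.floor_le (by linarith))
  calc ‖stirlingRemainder x / x‖
      = |stirlingRemainder m / m * (m / x) + (stirlingRemainder x - stirlingRemainder m) / x| := by
        rw [Real.norm_eq_abs]
        congr 1
        field_simp
        ring
    _ ≤ |stirlingRemainder m / m| * (m / x) + |stirlingRemainder x - stirlingRemainder m| / x := by
        grw [abs_add_le, abs_mul, abs_div (stirlingRemainder x - stirlingRemainder m),
          abs_of_pos (by positivity : (0 : ℝ) < m / x), abs_of_pos (by linarith : 0 < x)]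
    _ ≤ |stirlingRemainder m / m| + log (x + 1) / x := by
        gcongr
        · exact mul_le_of_le_one_right (abs_nonneg _) hmx
        · exact abs_stirlingRemainder_sub_floor_le hx

lemma tendsto_log_Gamma_add_one_sub_log_Gamma_sub {c : ℝ} (hc : 0 ≤ c) :
    Tendsto (fun x => log (Gamma (x + 1)) - log (Gamma (x + 1 - c)) - c * log x) atTop (𝓝 0) := by
  have hlo := ((tendsto_log_comp_add_sub_log (-c)).const_mul c)
  have hup := ((tendsto_log_comp_add_sub_log 1).const_mul c)
  rw [mul_zero] at hlo hup
  refine tendsto_of_tendsto_of_tendsto_of_le_of_le' hlo hup ?_ ?_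
  all_goals filter_upwards [eventually_gt_atTop c] with x hx
  · have h := mul_log_sub_one_le_log_Gamma_sub (by linarith : 1 < x + 1 - c)
      (by linarith : x + 1 - c ≤ x + 1)
    rw [sub_sub_cancel, show x + 1 - c - 1 = x + -c by ring] at h
    linarith
  · have h := log_Gamma_sub_le_mul_log (by linarith : 0 < x + 1 - c)
      (by linarith : x + 1 - c ≤ x + 1)
    rw [sub_sub_cancel] at h
    linarith

lemma tendsto_one_sub_div_mul_log_Gamma_sub_log_Gamma_sub {c : ℝ} (hc : 0 ≤ c) :
    Tendsto (fun x => (1 - c / x) * log (Gamma (x + 1)) - log (Gamma (x + 1 - c))) atTop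
      (𝓝 c) := by
  have h := (tendsto_log_Gamma_add_one_sub_log_Gamma_sub hc).sub
    ((tendsto_stirlingRemainder_div.sub_const 1).const_mul c)
  rw [show (0 : ℝ) - c * (0 - 1) = c by ring] at h
  refine h.congr' ?_
  filter_upwards [eventually_ne_atTop 0] with x hx
  rw [stirlingRemainder]
  field_simp
  ring

lemma div_mul_div_rpow_eq_exp {a b c d : ℝ} (ha : 0 < a) (hb : 0 < b) (hc : 0 < c) (hd : 0 < d)
    (t : ℝ) :
    a / b * (c / d) ^ t = exp ((log a - t * log d) + (t * log c - log b)) := by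
  rw [div_rpow hc.le hd.le, rpow_def_of_pos hc, rpow_def_of_pos hd, exp_add, exp_sub, exp_sub,
    exp_log ha, exp_log hb, mul_comm t, mul_comm t]
  field_simp

lemma tendsto_log_Gamma_sub_mul_log_Gamma_of_log_div_tendsto_zero {r : ℕ → ℝ}
    (hr : Tendsto r atTop atTop) (hlog : Tendsto (fun n : ℕ => log n / r n) atTop (𝓝 0))
    (ℓ : ℕ) :
    Tendsto (fun n : ℕ => log (Gamma (((n : ℝ) - ℓ) / r n + 1)) -
      ((n : ℝ) - ℓ) / n * log (Gamma ((n : ℝ) / r n + 1))) atTop (𝓝 0) := by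
  have hbound : Tendsto (fun n : ℕ => 2 * ℓ * (log (2 * π) * (r n)⁻¹ + log n / r n)) atTop
      (𝓝 0) := by
    simpa using ((hr.inv_tendsto_atTop.const_mul (log (2 * π))).add hlog).const_mul (2 * ℓ : ℝ)
  refine squeeze_zero_norm' ?_ hbound
  filter_upwards [eventually_ge_atTop (ℓ + 1), hr.eventually_ge_atTop 1] with n hn hrn
  have hn' : (ℓ : ℝ) + 1 ≤ n := by exact_mod_cast hn
  have hr0 : 0 < r n := by linarith
  have hn0 : (n : ℝ) ≠ 0 := by linarith
  have hz : (n : ℝ) / r n ≤ n := div_le_self (by linarith) hrn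
  have h := abs_log_Gamma_mul_add_one_sub_le (t := ((n : ℝ) - ℓ) / n) (z := n / r n)
    (div_nonneg (by linarith) (by linarith)) (div_le_one_of_le₀ (by linarith) (by linarith))
    (by positivity)
  have htz : ((n : ℝ) - ℓ) / n * (n / r n) = ((n : ℝ) - ℓ) / r n := by
    field_simp
  have h1tz : 2 * ((1 - ((n : ℝ) - ℓ) / n) * (n / r n)) = 2 * ℓ * (r n)⁻¹ := by
    field_simp
    ring
  have hlog_le : log (π * (n / r n + 1)) ≤ log (2 * π) + log n := by
    rw [← log_mul (by positivity) (by linarith)]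
    exact log_le_log (by positivity) (by nlinarith [pi_pos])
  rw [htz, h1tz] at h
  rw [Real.norm_eq_abs]
  calc _ ≤ 2 * ℓ * (r n)⁻¹ * log (π * (n / r n + 1)) := h
    _ ≤ 2 * ℓ * (r n)⁻¹ * (log (2 * π) + log n) := by gcongr
    _ = _ := by ring

lemma tendsto_mul_log_Gamma_half_sub_log_Gamma_half (ℓ : ℕ) :
    Tendsto (fun n : ℕ => ((n : ℝ) - ℓ) / n * log (Gamma ((n : ℝ) / 2 + 1)) -
      log (Gamma (((n : ℝ) - ℓ) / 2 + 1))) atTop (𝓝 ((ℓ : ℝ) / 2)) := by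
  have h := (tendsto_one_sub_div_mul_log_Gamma_sub_log_Gamma_sub
    (by positivity : (0 : ℝ) ≤ ℓ / 2)).comp
    (tendsto_natCast_atTop_atTop.atTop_div_const two_pos)
  refine h.congr' ?_
  filter_upwards [eventually_ne_atTop 0] with n hn
  have hn' : (n : ℝ) ≠ 0 := Nat.cast_ne_zero.2 hn
  simp only [Function.comp_apply]
  congr 2
  · field_simp
  · ring_nf

end Real

noncomputable def expectedSectionalVolume (ℓ n : ℕ) (r : ℝ) : ℝ :=
  (Gamma (((n : ℝ) - ℓ) / r + 1) / Gamma (((n : ℝ) - ℓ) / 2 + 1)) *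
    (Gamma ((n : ℝ) / 2 + 1) / Gamma ((n : ℝ) / r + 1)) ^ (((n : ℝ) - ℓ) / n)

theorem tendsto_expectedSectionalVolume {r : ℕ → ℝ} (hr : Tendsto r atTop atTop)
    (hlog : Tendsto (fun n : ℕ => log n / r n) atTop (𝓝 0)) (ℓ : ℕ) :
    Tendsto (fun n => expectedSectionalVolume ℓ n (r n)) atTop (𝓝 (exp ((ℓ : ℝ) / 2))) := by
  have h := ((tendsto_log_Gamma_sub_mul_log_Gamma_of_log_div_tendsto_zero hr hlog ℓ).add
    (tendsto_mul_log_Gamma_half_sub_log_Gamma_half ℓ)).rexp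
  rw [zero_add] at h
  refine h.congr' ?_
  filter_upwards [eventually_ge_atTop ℓ, hr.eventually_gt_atTop 0] with n hn hrn
  have hn' : (ℓ : ℝ) ≤ n := by exact_mod_cast hn
  rw [expectedSectionalVolume, div_mul_div_rpow_eq_exp] <;>
    exact Gamma_pos_of_pos (by positivity)

/-- For `b > 0`, `α > 0`, `r = b n^α` and fixed `ℓ ≥ 0`, the expected sectional volume
`G_ℓ(n) = (Γ((n-ℓ)/r + 1)/Γ((n-ℓ)/2 + 1)) (Γ(n/2 + 1)/Γ(n/r + 1))^{(n-ℓ)/n}`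
tends to `e^{ℓ/2}`. -/
theorem limit_sectional_volume_alpha_pos (b α : ℝ) (hb : 0 < b) (hα : 0 < α) (ℓ : ℕ) :
    Filter.Tendsto
      (fun n : ℕ =>
        (Real.Gamma (((n : ℝ) - ℓ) / (b * (n : ℝ) ^ α) + 1) /
            Real.Gamma (((n : ℝ) - ℓ) / 2 + 1)) *
          (Real.Gamma ((n : ℝ) / 2 + 1) / Real.Gamma ((n : ℝ) / (b * (n : ℝ) ^ α) + 1)) ^
            (((n : ℝ) - ℓ) / n))
      Filter.atTop (nhds (Real.exp ((ℓ : ℝ) / 2))) := by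
  have hr : Tendsto (fun n : ℕ => b * (n : ℝ) ^ α) atTop atTop :=
    ((tendsto_rpow_atTop hα).const_mul_atTop hb).comp tendsto_natCast_atTop_atTop
  have hlog : Tendsto (fun n : ℕ => log n / (b * (n : ℝ) ^ α)) atTop (𝓝 0) := by
    have h := ((isLittleO_log_rpow_atTop hα).tendsto_div_nhds_zero.div_const b).comp
      tendsto_natCast_atTop_atTop
    rw [zero_div] at h
    exact h.congr fun n => by simp only [Function.comp_apply, div_div, mul_comm]
  exact tendsto_expectedSectionalVolume hr hlog ℓ
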